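/- The group G = ⟨a, b⟩ is infinite. -/

import Mathlib

/-!
Setup: the automorphism group `Aut(T₈)` of the rooted 8-regular tree, realized
as the group of *portraits*: an automorphism is determined by the permutation
of `{1,…,8}` (here `Fin 8`) that it induces below each vertex (a finite word
over the alphabet).  Composition is written left-to-right: `p * q` acts by
first applying `p`, then `q` (this is the convention of the paper, where a
word `a b a b⁻¹ a` acts by applying `a` first).
-/

namespace T8

/-- The root permutation of the generator `a` : `(34)(67)(58)` on letters
`1,…,8`, written `0`-indexed on `Fin 8` as `(2 3)(5 6)(4 7)`. -/
def σa : Equiv.Perm (Fin 8) := Equiv.swap 2 3 * Equiv.swap 5 6 * Equiv.swap 4 7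

/-- The root permutation of the generator `b` : `(123)(456)` on letters
`1,…,8`, written `0`-indexed on `Fin 8` as `(0 1 2)(3 4 5)`. -/
def σb : Equiv.Perm (Fin 8) :=
  (Equiv.swap 0 1 * Equiv.swap 1 2) * (Equiv.swap 3 4 * Equiv.swap 4 5)

/-- An automorphism of the rooted `8`-regular tree, given by its portrait:
for each vertex `v` (a finite word over the `8`-letter alphabet), the
permutation induced on the letters just below `v`. -/
@[ext] structure Aut where
  val : List (Fin 8) → Equiv.Perm (Fin 8)

/-- The section (state) of a tree automorphism at a first-level vertex `i`. -/
def sect (p : Aut) (i : Fin 8) : Aut := ⟨fun v => p.val (i :: v)⟩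

/-- The section of a tree automorphism at an arbitrary vertex (word) `v`. -/
def sectWord (p : Aut) : List (Fin 8) → Aut
  | [] => p
  | i :: t => sectWord (sect p i) t

/-- The action of a tree automorphism on vertices:
`p (i·w) = (σ_p i) · (p_i w)` where `σ_p = p.val []` is the root permutation
and `p_i` is the section at `i`.  This is length- and prefix-preserving. -/
def act : Aut → List (Fin 8) → List (Fin 8)
  | _, [] => []
  | p, i :: t => p.val [] i :: act (sect p i) t

/-- The action of the inverse of a tree automorphism on vertices. -/
def actInv : Aut → List (Fin 8) → List (Fin 8)
  | _, [] => []
  | p, i :: t => (p.val [])⁻¹ i :: actInv (sect p ((p.val [])⁻¹ i)) t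

instance : One Aut := ⟨⟨fun _ => 1⟩⟩
instance : Mul Aut := ⟨fun p q => ⟨fun v => q.val (act p v) * p.val v⟩⟩
instance : Inv Aut := ⟨fun p => ⟨fun v => (p.val (actInv p v))⁻¹⟩⟩

@[simp] lemma one_val (v : List (Fin 8)) : (1 : Aut).val v = 1 := rfl
@[simp] lemma mul_val (p q : Aut) (v : List (Fin 8)) :
    (p * q).val v = q.val (act p v) * p.val v := rfl
@[simp] lemma inv_val (p : Aut) (v : List (Fin 8)) :
    (p⁻¹).val v = (p.val (actInv p v))⁻¹ := rfl

@[simp] lemma sect_one (i : Fin 8) : sect 1 i = 1 := rfl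

lemma sect_mul (p q : Aut) (i : Fin 8) :
    sect (p * q) i = sect p i * sect q (p.val [] i) := rfl

lemma sect_inv (p : Aut) (i : Fin 8) :
    sect p⁻¹ i = (sect p ((p.val [])⁻¹ i))⁻¹ := rfl

lemma act_one : ∀ v : List (Fin 8), act (1 : Aut) v = v
  | [] => rfl
  | i :: t => by
    show (1 : Equiv.Perm (Fin 8)) i :: act (sect 1 i) t = i :: t
    rw [sect_one, act_one t, Equiv.Perm.one_apply]

lemma act_mul : ∀ (v : List (Fin 8)) (p q : Aut),
    act (p * q) v = act q (act p v)
  | [], _, _ => rfl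
  | i :: t, p, q => by
    show (p * q).val [] i :: act (sect (p * q) i) t
        = act q (p.val [] i :: act (sect p i) t)
    rw [sect_mul, act_mul t]
    show (q.val (act p []) * p.val []) i :: _
        = q.val [] (p.val [] i) :: act (sect q (p.val [] i)) (act (sect p i) t)
    rfl

lemma act_inv : ∀ (v : List (Fin 8)) (p : Aut), act p⁻¹ v = actInv p v
  | [], _ => rfl
  | i :: t, p => by
    show (p⁻¹).val [] i :: act (sect p⁻¹ i) t
        = (p.val [])⁻¹ i :: actInv (sect p ((p.val [])⁻¹ i)) t
    rw [sect_inv, act_inv t]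
    rfl

lemma actInv_act : ∀ (v : List (Fin 8)) (p : Aut), actInv p (act p v) = v
  | [], _ => rfl
  | i :: t, p => by
    show (p.val [])⁻¹ (p.val [] i) ::
        actInv (sect p ((p.val [])⁻¹ (p.val [] i))) (act (sect p i) t) = i :: t
    rw [show (p.val [])⁻¹ (p.val [] i) = i from Equiv.symm_apply_apply _ _, actInv_act t]

lemma act_actInv : ∀ (v : List (Fin 8)) (p : Aut), act p (actInv p v) = v
  | [], _ => rfl
  | i :: t, p => by
    show p.val [] ((p.val [])⁻¹ i) ::
        act (sect p ((p.val [])⁻¹ i)) (actInv (sect p ((p.val [])⁻¹ i)) t) = i :: t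
    rw [show p.val [] ((p.val [])⁻¹ i) = i from Equiv.apply_symm_apply _ _, act_actInv t]

instance : Group Aut where
  mul_assoc p q r := by
    ext v i
    simp [mul_val, act_mul, mul_assoc]
  one_mul p := by
    ext v i
    simp [mul_val, act_one]
  mul_one p := by
    ext v i
    simp [mul_val]
  inv_mul_cancel p := by
    ext v i
    simp [mul_val, inv_val, act_inv, actInv_act]

/-- The portrait of the generator `a = ⟨a, 1, 1, 1, 1, 1, 1, 1⟩ (34)(67)(58)`:
root permutation `σa`, section `a` at the first letter, trivial sections
elsewhere. -/
def aval : List (Fin 8) → Equiv.Perm (Fin 8)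
  | [] => σa
  | i :: t => if i = 0 then aval t else 1

/-- The generator `a = ⟨a, 1, 1, 1, 1, 1, 1, 1⟩ (34)(67)(58)`. -/
def a : Aut := ⟨aval⟩

/-- The portraits of the generator `b` (for `tt`) and of `b⁻¹` (for `ff`):
`b = ⟨1, 1, 1, 1, 1, 1, b, b⁻¹⟩ (123)(456)` and
`b⁻¹ = ⟨1, 1, 1, 1, 1, 1, b⁻¹, b⟩ (132)(465)`. -/
def bval : Bool → List (Fin 8) → Equiv.Perm (Fin 8)
  | s, [] => if s then σb else σb⁻¹
  | s, i :: t => if i = 6 then bval s t else if i = 7 then bval (!s) t else 1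

/-- The generator `b = ⟨1, 1, 1, 1, 1, 1, b, b⁻¹⟩ (123)(456)`. -/
def b : Aut := ⟨bval true⟩

/-- Sanity: the first section of `a` is `a` itself. -/
lemma sect_a_zero : sect a 0 = a := rfl

/-- Sanity: the section of `b` at the letter `7` (index `6`) is `b` itself. -/
lemma sect_b_six : sect b 6 = b := rfl

/-- The group `G = ⟨a, b⟩ = ⟨a, b, b⁻¹⟩ ≤ Aut(T₈)` of the paper. -/
def G : Subgroup Aut := Subgroup.closure {a, b}

lemma a_mem : a ∈ G := Subgroup.subset_closure (Set.mem_insert _ _)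

lemma b_mem : b ∈ G := Subgroup.subset_closure (Set.mem_insert_of_mem _ rfl)

end T8

/-!
The elements of `G` fixing the first-level vertex `0` form a proper subgroup (`b` moves `0`),
and taking sections at `0` maps it homomorphically onto a subgroup containing both generators:
`a` is its own section at `0`, and `b` is the section at `0` of a conjugate `c b c⁻¹`, where
`c ∈ G` carries `0` to `6` with trivial section at `0`. A finite group cannot be covered by
the image of a proper subgroup.
-/

theorem Subgroup.infinite_of_le_range {M : Type*} [Group M] {G H : Subgroup M} (hHG : H < G)
    (f : H →* M) (hG : G ≤ f.range) : Infinite G := by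
  by_contra hfin
  rw [not_infinite_iff_finite] at hfin
  have : Finite H := Finite.of_injective _ (Subgroup.inclusion_injective hHG.le)
  have : Finite f.range := Finite.of_surjective _ f.rangeRestrict_surjective
  have hcover : Nat.card G ≤ Nat.card H :=
    (Subgroup.card_le_of_le hG).trans
      (Nat.card_le_card_of_surjective _ f.rangeRestrict_surjective)
  exact hcover.not_gt (Set.Finite.card_lt_card (Set.toFinite (G : Set M)) hHG)

namespace T8

def rootStab (i : Fin 8) : Subgroup Aut where
  carrier := {p | p.val [] i = i}
  one_mem' := rfl
  mul_mem' {p q} hp hq := by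
    show q.val [] (p.val [] i) = i
    rw [hp, hq]
  inv_mem' {p} hp := by
    show (p.val [])⁻¹ i = i
    rw [Equiv.Perm.inv_eq_iff_eq, hp]

lemma mem_rootStab {p : Aut} {i : Fin 8} : p ∈ rootStab i ↔ p.val [] i = i := Iff.rfl

def sectHom (i : Fin 8) : rootStab i →* Aut where
  toFun p := sect p i
  map_one' := rfl
  map_mul' p q := by
    show sect (p.1 * q.1) i = sect p i * sect q i
    rw [sect_mul, p.2]

lemma sect_conj {p q : Aut} {i j : Fin 8} (hp : p.val [] i = j) (hq : q ∈ rootStab j) :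
    sect (p * q * p⁻¹) i = sect p i * sect q j * (sect p i)⁻¹ := by
  have hpq : (p * q).val [] i = j := by
    show q.val [] (p.val [] i) = j
    rw [hp, mem_rootStab.mp hq]
  have hinv : (p.val [])⁻¹ j = i := by rw [Equiv.Perm.inv_eq_iff_eq, hp]
  rw [sect_mul, sect_mul, hp, hpq, sect_inv, hinv]

lemma conj_mem_rootStab {p q : Aut} {i j : Fin 8} (hp : p.val [] i = j) (hq : q ∈ rootStab j) :
    p * q * p⁻¹ ∈ rootStab i := by
  show (p.val [])⁻¹ (q.val [] (p.val [] i)) = i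
  rw [hp, hq, Equiv.Perm.inv_eq_iff_eq, hp]

/-- Along `0 ↦ 1 ↦ 2 ↦ 3 ↦ 4 ↦ 5 ↦ 6` every letter passed is one where the generator
applied has trivial section, so `carry` moves `0` to `6` with trivial section at `0`. -/
def carry : Aut := b * b * a * b * b * a

lemma carry_mem : carry ∈ G := by
  unfold carry
  apply_rules [mul_mem, a_mem, b_mem]

lemma carry_root_zero : carry.val [] 0 = 6 := by decide

lemma sect_carry_zero : sect carry 0 = 1 := rfl

lemma b_mem_rootStab_six : b ∈ rootStab 6 := mem_rootStab.mpr (by decide)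

lemma b_not_mem_rootStab_zero : b ∉ rootStab 0 := mt mem_rootStab.mp (by decide)

lemma a_mem_rootStab_zero : a ∈ rootStab 0 := mem_rootStab.mpr (by decide)

lemma G_le_range_sectHom :
    G ≤ ((sectHom 0).comp (Subgroup.inclusion (inf_le_left : rootStab 0 ⊓ G ≤ _))).range := by
  refine (Subgroup.closure_le _).mpr ?_
  rintro y (rfl | rfl)
  · exact ⟨⟨a, Subgroup.mem_inf.mpr ⟨a_mem_rootStab_zero, a_mem⟩⟩, sect_a_zero⟩
  · refine ⟨⟨carry * b * carry⁻¹, Subgroup.mem_inf.mpr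
      ⟨conj_mem_rootStab carry_root_zero b_mem_rootStab_six,
        mul_mem (mul_mem carry_mem b_mem) (inv_mem carry_mem)⟩⟩, ?_⟩
    show sect (carry * b * carry⁻¹) 0 = b
    rw [sect_conj carry_root_zero b_mem_rootStab_six, sect_carry_zero, sect_b_six]
    group

/-- the group `G = ⟨a, b⟩` is infinite. -/
theorem stmt_9 : Infinite G :=
  Subgroup.infinite_of_le_range
    (SetLike.lt_iff_le_and_exists.mpr
      ⟨inf_le_right, b, b_mem, fun hb => b_not_mem_rootStab_zero hb.1⟩)
    _ G_le_range_sectHom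

end T8
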